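/- arXiv:1407.6681 — 2 statements merged into one kernel-verified Lean document; each statement's English description precedes it below -/
import Mathlib

section
/- Any isomorphism between finite induced subgraphs of a countable graph with property (*₂) extends to an automorphism of the whole graph (homogeneity of the random graph). -/
/-- Property `(*₂)`: for every pair of finite disjoint sets `U`, `W` of vertices there is a
vertex `z` outside `U ∪ W` adjacent to all vertices in `U` and to none in `W`. -/
def ExtTwo {V : Type*} (G : SimpleGraph V) : Prop :=
  ∀ U W : Finset V, Disjoint U W →
    ∃ z, z ∉ U ∧ z ∉ W ∧ (∀ u ∈ U, G.Adj z u) ∧ (∀ w ∈ W, ¬ G.Adj z w)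

/-!
Back and forth. Property `(*₂)` of `H` supplies a vertex with any prescribed adjacency pattern
to a finite set, so a finite partial isomorphism `G → H` extends to any further vertex of `G`;
by symmetry, `(*₂)` of `G` lets it reach any further vertex of `H`. The Rasiowa–Sikorski lemma
(`Order.idealOfCofinals`) then gives a directed family of finite partial isomorphisms containing
the given one and meeting all these extension conditions, and its union is an isomorphism.
-/

theorem ExtTwo.exists_adj_iff {V : Type*} {G : SimpleGraph V} (h : ExtTwo G) (S : Finset V)
    (P : V → Prop) : ∃ z ∉ S, ∀ s ∈ S, G.Adj z s ↔ P s := by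
  classical
  obtain ⟨z, hzU, hzW, hU, hW⟩ := h _ _ (Finset.disjoint_filter_filter_not S S P)
  refine ⟨z, fun hz => ?_, fun s hs => ⟨fun hzs => by_contra fun hPs => ?_, fun hPs => ?_⟩⟩
  · by_cases hPz : P z
    · exact hzU (Finset.mem_filter.2 ⟨hz, hPz⟩)
    · exact hzW (Finset.mem_filter.2 ⟨hz, hPz⟩)
  · exact hW s (Finset.mem_filter.2 ⟨hs, hPs⟩) hzs
  · exact hU s (Finset.mem_filter.2 ⟨hs, hPs⟩)

namespace SimpleGraph

variable {V W : Type*} {G : SimpleGraph V} {H : SimpleGraph W}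

/-- A set of pairs is a partial isomorphism from `G` to `H` when it is the graph of a bijection
between its projections that preserves and reflects adjacency. -/
def IsPartialIso (G : SimpleGraph V) (H : SimpleGraph W) (R : Set (V × W)) : Prop :=
  ∀ p ∈ R, ∀ q ∈ R, (p.1 = q.1 ↔ p.2 = q.2) ∧ (G.Adj p.1 q.1 ↔ H.Adj p.2 q.2)

namespace IsPartialIso

theorem swap {R : Set (V × W)} (hR : G.IsPartialIso H R) :
    H.IsPartialIso G (Prod.swap '' R) := by
  rintro _ ⟨p, hp, rfl⟩ _ ⟨q, hq, rfl⟩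
  exact ⟨(hR p hp q hq).1.symm, (hR p hp q hq).2.symm⟩

theorem insert {R : Set (V × W)} (hR : G.IsPartialIso H R) {v : V} {w : W}
    (hvw : ∀ p ∈ R, (v = p.1 ↔ w = p.2) ∧ (G.Adj v p.1 ↔ H.Adj w p.2)) :
    G.IsPartialIso H (insert (v, w) R) := by
  rintro p (rfl | hp) q (rfl | hq)
  · simp
  · exact hvw q hq
  · exact ⟨eq_comm.trans ((hvw p hp).1.trans eq_comm), G.adj_comm _ _ |>.trans
      ((hvw p hp).2.trans (H.adj_comm _ _))⟩
  · exact hR p hp q hq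

theorem exists_insert_left (hH : ExtTwo H) {R : Finset (V × W)} (hR : G.IsPartialIso H R)
    (v : V) : ∃ w, G.IsPartialIso H (Insert.insert (v, w) (R : Set (V × W))) := by
  by_cases hv : ∃ p ∈ R, p.1 = v
  · obtain ⟨p, hp, rfl⟩ := hv
    exact ⟨p.2, by rwa [Set.insert_eq_of_mem (by simpa using hp)]⟩
  push Not at hv
  classical
  obtain ⟨w, hw, hadj⟩ := hH.exists_adj_iff (R.image Prod.snd)
    fun y => ∃ q ∈ R, q.2 = y ∧ G.Adj v q.1
  refine ⟨w, hR.insert fun p hp => ⟨?_, ?_⟩⟩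
  · exact iff_of_false (hv p hp).symm fun h => hw (Finset.mem_image.2 ⟨p, hp, h.symm⟩)
  · rw [hadj _ (Finset.mem_image_of_mem _ hp)]
    exact ⟨fun hvp => ⟨p, hp, rfl, hvp⟩, fun ⟨q, hq, hqp, hvq⟩ => (hR q hq p hp).1.2 hqp ▸ hvq⟩

theorem exists_insert_right (hG : ExtTwo G) {R : Finset (V × W)} (hR : G.IsPartialIso H R)
    (w : W) : ∃ v, G.IsPartialIso H (Insert.insert (v, w) (R : Set (V × W))) := by
  classical
  obtain ⟨v, hv⟩ := exists_insert_left hG (R := R.image Prod.swap) (by simpa using hR.swap) w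
  refine ⟨v, ?_⟩
  simpa [Set.image_insert_eq, Set.image_image] using hv.swap

theorem iUnion_of_directed {ι : Type*} {R : ι → Set (V × W)}
    (hR : ∀ i, G.IsPartialIso H (R i)) (hdir : Directed (· ⊆ ·) R) :
    G.IsPartialIso H (⋃ i, R i) := by
  rintro p ⟨_, ⟨i, rfl⟩, hi⟩ q ⟨_, ⟨j, rfl⟩, hj⟩
  obtain ⟨k, hik, hjk⟩ := hdir i j
  exact hR k p (hik hi) q (hjk hj)

theorem exists_iso_of_total {R : Set (V × W)} (hR : G.IsPartialIso H R)
    (hdom : ∀ v, ∃ w, (v, w) ∈ R) (hcod : ∀ w, ∃ v, (v, w) ∈ R) :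
    ∃ ψ : G ≃g H, ∀ p ∈ R, ψ p.1 = p.2 := by
  choose f hf using hdom
  have hf_eq : ∀ p ∈ R, f p.1 = p.2 := fun p hp => (hR _ (hf p.1) p hp).1.1 rfl
  have hinj : Function.Injective f := fun a b hab => (hR _ (hf a) _ (hf b)).1.2 hab
  have hsurj : Function.Surjective f := fun w =>
    (hcod w).imp fun v hv => hf_eq (v, w) hv
  exact ⟨⟨Equiv.ofBijective f ⟨hinj, hsurj⟩, fun {a b} => (hR _ (hf a) _ (hf b)).2.symm⟩, hf_eq⟩

end IsPartialIso

theorem isPartialIso_range_induce {S : Set V} {T : Set W} (φ : G.induce S ≃g H.induce T) :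
    G.IsPartialIso H (Set.range fun a : S => (a.1, (φ a).1)) := by
  rintro _ ⟨a, rfl⟩ _ ⟨b, rfl⟩
  exact ⟨Subtype.ext_iff.symm.trans (φ.injective.eq_iff.symm.trans Subtype.ext_iff),
    φ.map_adj_iff.symm⟩

abbrev FinPartialIso (G : SimpleGraph V) (H : SimpleGraph W) :=
  {R : Finset (V × W) // G.IsPartialIso H R}

theorem isCofinal_definedAt_left (hH : ExtTwo H) (v : V) :
    IsCofinal {f : FinPartialIso G H | ∃ w, (v, w) ∈ f.1} := fun f => by
  classical
  obtain ⟨w, hw⟩ := f.2.exists_insert_left hH v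
  exact ⟨⟨insert (v, w) f.1, by simpa using hw⟩, ⟨w, Finset.mem_insert_self _ _⟩,
    Finset.subset_insert _ _⟩

theorem isCofinal_definedAt_right (hG : ExtTwo G) (w : W) :
    IsCofinal {f : FinPartialIso G H | ∃ v, (v, w) ∈ f.1} := fun f => by
  classical
  obtain ⟨v, hv⟩ := f.2.exists_insert_right hG w
  exact ⟨⟨insert (v, w) f.1, by simpa using hv⟩, ⟨v, Finset.mem_insert_self _ _⟩,
    Finset.subset_insert _ _⟩

theorem IsPartialIso.exists_iso_of_extTwo [Countable V] [Countable W] {R : Set (V × W)}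
    (hR : G.IsPartialIso H R) (hfin : R.Finite) (hG : ExtTwo G) (hH : ExtTwo H) :
    ∃ ψ : G ≃g H, ∀ p ∈ R, ψ p.1 = p.2 := by
  cases nonempty_encodable (V ⊕ W)
  let D : V ⊕ W → Order.Cofinal (FinPartialIso G H) :=
    Sum.elim (fun v => ⟨_, isCofinal_definedAt_left hH v⟩)
      (fun w => ⟨_, isCofinal_definedAt_right hG w⟩)
  let f₀ : FinPartialIso G H := ⟨hfin.toFinset, by simpa using hR⟩
  let I := Order.idealOfCofinals f₀ D
  have hI : G.IsPartialIso H (⋃ f : I, (f.1.1 : Set (V × W))) :=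
    IsPartialIso.iUnion_of_directed (fun f => f.1.2)
      ((directedOn_iff_directed.1 I.directed).mono_comp _ fun _ _ h => Finset.coe_subset.2 h)
  have hmem : ∀ i, ∃ f ∈ I, f ∈ D i := fun i =>
    (Order.cofinal_meets_idealOfCofinals f₀ D i).imp fun _ h => h.symm
  obtain ⟨ψ, hψ⟩ := hI.exists_iso_of_total
    (fun v => by
      obtain ⟨f, hfI, w, hw⟩ := hmem (.inl v)
      exact ⟨w, Set.mem_iUnion.2 ⟨⟨f, hfI⟩, hw⟩⟩)
    (fun w => by
      obtain ⟨f, hfI, v, hv⟩ := hmem (.inr w)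
      exact ⟨v, Set.mem_iUnion.2 ⟨⟨f, hfI⟩, hv⟩⟩)
  exact ⟨ψ, fun p hp => hψ p
    (Set.mem_iUnion.2 ⟨⟨f₀, Order.mem_idealOfCofinals f₀ D⟩, by simpa [f₀] using hp⟩)⟩

end SimpleGraph

/-- Homogeneity of the random graph: any isomorphism between finite induced subgraphs of a
countable graph with property `(*₂)` extends to an automorphism of the whole graph. -/
theorem extTwo_homogeneous {V : Type*} [Countable V] (G : SimpleGraph V) (h : ExtTwo G)
    (A B : Finset V) (φ : G.induce (A : Set V) ≃g G.induce (B : Set V)) :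
    ∃ ψ : G ≃g G, ∀ (a : V) (ha : a ∈ (A : Set V)), ψ a = (φ ⟨a, ha⟩ : V) := by
  obtain ⟨ψ, hψ⟩ :=
    (SimpleGraph.isPartialIso_range_induce φ).exists_iso_of_extTwo (Set.finite_range _) h h
  exact ⟨ψ, fun a ha => hψ _ ⟨⟨a, ha⟩, rfl⟩⟩
end

section
/- If a countable graph Γ has the property that every finite vertex set has a common neighbour, then Γ contains the random graph R as a spanning subgraph, i.e. there is a graph Δ on the same vertex set with edge set contained in that of Γ such that Δ satisfies property (*₂). -/
namespace SimpleGraph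

variable {V : Type*}

section Greedy

variable [DecidableEq V] (pick : Finset V → V) (A : ℕ → Finset V)

def greedyUsed : ℕ → Finset V
  | 0 => ∅
  | n + 1 => insert (pick (greedyUsed n ∪ A n)) (greedyUsed n ∪ A n)

theorem greedyUsed_mono : Monotone (greedyUsed pick A) :=
  monotone_nat_of_le_succ fun n => by
    simp only [greedyUsed]
    exact Finset.subset_union_left.trans (Finset.subset_insert _ _)

theorem subset_greedyUsed {k n : ℕ} (hkn : k < n) : A k ⊆ greedyUsed pick A n := by
  have hsucc : A k ⊆ greedyUsed pick A (k + 1) :=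
    Finset.subset_union_right.trans (Finset.subset_insert _ _)
  exact hsucc.trans (greedyUsed_mono pick A hkn)

theorem pick_mem_greedyUsed {k n : ℕ} (hkn : k < n) :
    pick (greedyUsed pick A k ∪ A k) ∈ greedyUsed pick A n :=
  greedyUsed_mono pick A hkn (Finset.mem_insert_self _ _ : _ ∈ greedyUsed pick A (k + 1))

end Greedy

theorem exists_seq_adj_of_forall_exists_adj (G : SimpleGraph V)
    (h : ∀ F : Finset V, ∃ z, ∀ v ∈ F, G.Adj z v) (A : ℕ → Finset V) :
    ∃ z : ℕ → V, (∀ k n, k ≤ n → ∀ v ∈ A k, G.Adj (z n) v) ∧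
      ∀ k n, k < n → G.Adj (z n) (z k) := by
  classical
  choose pick hpick using h
  set z := fun n => pick (greedyUsed pick A n ∪ A n)
  have hz : ∀ n, ∀ v ∈ greedyUsed pick A n ∪ A n, G.Adj (z n) v := fun n => hpick _
  refine ⟨z, fun k n hkn v hv => hz n v ?_, fun k n hkn => hz n _ ?_⟩
  · rcases hkn.lt_or_eq with hlt | rfl
    · exact Finset.mem_union_left _ (subset_greedyUsed pick A hlt hv)
    · exact Finset.mem_union_right _ hv
  · exact Finset.mem_union_left _ (pick_mem_greedyUsed pick A hkn)

section Witness

variable (e : ℕ → Finset V × Finset V) (z : ℕ → V)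

def witnessGraph : SimpleGraph V :=
  fromRel fun x y => ∃ n, x = z n ∧ y ∈ (e n).1

theorem witnessGraph_le {G : SimpleGraph V} (hadj : ∀ n, ∀ u ∈ (e n).1, G.Adj (z n) u) :
    witnessGraph e z ≤ G := by
  rintro x y ⟨-, ⟨n, rfl, hy⟩ | ⟨n, rfl, hx⟩⟩
  · exact hadj n y hy
  · exact (hadj n x hx).symm

variable {e z}

theorem extTwo_witnessGraph [DecidableEq V] (he : Function.Surjective e)
    (hinj : Function.Injective z) (hfresh : ∀ k n, k ≤ n → z n ∉ (e k).1 ∪ (e k).2) :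
    ExtTwo (witnessGraph e z) := by
  intro U W hUW
  obtain ⟨n, hn⟩ := he (U, W)
  obtain ⟨rfl, rfl⟩ := Prod.ext_iff.mp hn
  have hfresh_n := hfresh n n le_rfl
  simp only [Finset.mem_union, not_or] at hfresh_n
  refine ⟨z n, hfresh_n.1, hfresh_n.2,
    fun u hu => ⟨(ne_of_mem_of_not_mem hu hfresh_n.1).symm, Or.inl ⟨n, rfl, hu⟩⟩, ?_⟩
  rintro w hw ⟨-, ⟨m, hzm, hwm⟩ | ⟨m, rfl, hzm⟩⟩
  · obtain rfl := hinj hzm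
    exact Finset.disjoint_left.mp hUW hwm hw
  · rcases le_total m n with hmn | hnm
    · exact hfresh m n hmn (Finset.mem_union_left _ hzm)
    · exact hfresh n m hnm (Finset.mem_union_right _ hw)

end Witness

end SimpleGraph

/-- If every finite vertex set of a countable graph `Γ` has a common neighbour, then `Γ`
contains the random graph as a spanning subgraph: there is a graph `Δ` on the same vertex
set, with edge set contained in that of `Γ`, satisfying property `(*₂)`. -/
theorem spanning_random_subgraph {V : Type*} [Countable V] (G : SimpleGraph V)
    (h : ∀ F : Finset V, ∃ z, ∀ v ∈ F, G.Adj z v) :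
    ∃ Δ : SimpleGraph V, Δ ≤ G ∧ ExtTwo Δ := by
  classical
  obtain ⟨e, he⟩ := exists_surjective_nat (Finset V × Finset V)
  obtain ⟨z, hzA, hzz⟩ :=
    G.exists_seq_adj_of_forall_exists_adj h fun n => (e n).1 ∪ (e n).2
  refine ⟨SimpleGraph.witnessGraph e z, SimpleGraph.witnessGraph_le e z fun n u hu => ?_,
    SimpleGraph.extTwo_witnessGraph he ?_ ?_⟩
  · exact hzA n n le_rfl u (Finset.mem_union_left _ hu)
  · exact Function.Injective.of_lt_imp_ne fun k n hkn hzkn => G.irrefl (hzkn ▸ hzz k n hkn)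
  · exact fun k n hkn hz => G.irrefl (hzA k n hkn _ hz)
end
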